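/- arXiv:2604.00038 — 4 statements merged into one kernel-verified Lean document; each statement's English description precedes it below -/
import Mathlib

section
/- For every real ε with 0 ≤ ε ≤ 1, one has 2·√(ε·(1−ε)) ≤ exp(−2·(1/2 − ε)²). -/
/-! With `γ = 1/2 - ε` one has `4ε(1 - ε) = 1 - 4γ²`, so the claim is `√(1 - 4γ²) ≤ exp (-2γ²)`,
the square root of `1 - x ≤ exp (-x)`. -/

open Real

theorem Real.sqrt_one_sub_le_exp_neg_half (x : ℝ) : √(1 - x) ≤ exp (-(x / 2)) := by
  rw [sqrt_le_left (exp_pos _).le, ← exp_nat_mul]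
  calc 1 - x ≤ exp (-x) := one_sub_le_exp_neg x
    _ = exp ((2 : ℕ) * -(x / 2)) := by push_cast; ring_nf

theorem two_mul_sqrt_mul_one_sub_eq (ε : ℝ) :
    2 * √(ε * (1 - ε)) = √(1 - 4 * (1 / 2 - ε) ^ 2) := by
  rw [show 1 - 4 * (1 / 2 - ε) ^ 2 = 2 ^ 2 * (ε * (1 - ε)) by ring,
    sqrt_mul (sq_nonneg (2 : ℝ)), sqrt_sq zero_le_two]

theorem adaboost_per_round_bound_general (ε : ℝ) :
    2 * Real.sqrt (ε * (1 - ε)) ≤ Real.exp (-(2 * (1 / 2 - ε) ^ 2)) := by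
  calc 2 * √(ε * (1 - ε)) = √(1 - 4 * (1 / 2 - ε) ^ 2) := two_mul_sqrt_mul_one_sub_eq ε
    _ ≤ exp (-(4 * (1 / 2 - ε) ^ 2 / 2)) := sqrt_one_sub_le_exp_neg_half _
    _ = exp (-(2 * (1 / 2 - ε) ^ 2)) := by ring_nf

/-- Per-round bound in the AdaBoost training-error analysis: for `0 ≤ ε ≤ 1`,
the normalization factor `2√(ε(1-ε))` is bounded by `exp (-2 (1/2 - ε)²)`. -/
theorem adaboost_per_round_bound (ε : ℝ) (h0 : 0 ≤ ε) (h1 : ε ≤ 1) :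
    2 * Real.sqrt (ε * (1 - ε)) ≤ Real.exp (-(2 * (1 / 2 - ε) ^ 2)) :=
  adaboost_per_round_bound_general ε
end

section
/- Let n ≥ 1 and T ≥ 1. Let s : {1,…,T} × {1,…,n} → {−1,+1} and let α_1,…,α_T be real numbers; define D_1(i) = 1/n, Z_t = ∑_i D_t(i)·exp(−α_t·s(t,i)), and D_{t+1}(i) = D_t(i)·exp(−α_t·s(t,i))/Z_t, assuming Z_t > 0 for all t. Then the training error satisfies (1/n)·|{i : ∑_{t=1}^T α_t·s(t,i) ≤ 0}| ≤ ∏_{t=1}^T Z_t. -/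
/-!
Unrolling the reweighting gives `(∏_{t ≤ T} Z t) · D (T+1) i = D 1 i · exp (-(margin of i))`.
Summing over `i` and using that `D (T+1)` is normalized, `∏ Z t` is the average of
`exp (-margin)`, which dominates the indicator of a nonpositive margin.
-/

open Finset

theorem prod_mul_eq_mul_prod_of_reweight {ι : Type*} (D c : ℕ → ι → ℝ) (Z : ℕ → ℝ) (T : ℕ)
    (hZ : ∀ t ∈ Icc 1 T, Z t ≠ 0)
    (hD : ∀ t ∈ Icc 1 T, ∀ i, D (t + 1) i = D t i * c t i / Z t) (i : ι) :
    (∏ t ∈ Icc 1 T, Z t) * D (T + 1) i = D 1 i * ∏ t ∈ Icc 1 T, c t i := by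
  induction T with
  | zero => simp
  | succ T ih =>
    have hsub : Icc 1 T ⊆ Icc 1 (T + 1) := Icc_subset_Icc_right T.le_succ
    have h1 : 1 ≤ T + 1 := Nat.le_add_left 1 T
    have hlast : T + 1 ∈ Icc 1 (T + 1) := right_mem_Icc.2 h1
    rw [prod_Icc_succ_top h1, prod_Icc_succ_top h1, hD _ hlast,
      ← mul_assoc (D 1 i), ← ih (fun t ht => hZ t (hsub ht)) (fun t ht => hD t (hsub ht))]
    field_simp [hZ _ hlast]

theorem sum_reweight_eq_one {ι : Type*} [Fintype ι] (D c : ℕ → ι → ℝ) (Z : ℕ → ℝ) (t : ℕ)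
    (hZ : Z t = ∑ i, D t i * c t i) (hZne : Z t ≠ 0)
    (hD : ∀ i, D (t + 1) i = D t i * c t i / Z t) :
    ∑ i, D (t + 1) i = 1 := by
  simp_rw [hD, ← sum_div, ← hZ, div_self hZne]

theorem card_filter_nonpos_le_sum_exp_neg {ι : Type*} [Fintype ι] (f : ι → ℝ) :
    (#{i | f i ≤ 0} : ℝ) ≤ ∑ i, Real.exp (-f i) := by
  rw [card_filter, Nat.cast_sum]
  refine sum_le_sum fun i _ => ?_
  split_ifs with hi
  · simpa using Real.one_le_exp (neg_nonneg.2 hi)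
  · simpa using (Real.exp_pos _).le

theorem adaboost_training_error_le_prod_Z_general (n T : ℕ) (hT : 1 ≤ T)
    (s : ℕ → Fin n → ℝ)
    (α : ℕ → ℝ) (D : ℕ → Fin n → ℝ) (Z : ℕ → ℝ)
    (hD1 : ∀ i, D 1 i = 1 / (n : ℝ))
    (hZ : ∀ t ∈ Icc 1 T, Z t = ∑ i, D t i * Real.exp (-(α t * s t i)))
    (hZpos : ∀ t ∈ Icc 1 T, 0 < Z t)
    (hD : ∀ t ∈ Icc 1 T, ∀ i, D (t + 1) i = D t i * Real.exp (-(α t * s t i)) / Z t) :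
    (1 / (n : ℝ)) *
        ((univ.filter fun i => ∑ t ∈ Icc 1 T, α t * s t i ≤ 0).card : ℝ) ≤
      ∏ t ∈ Icc 1 T, Z t := by
  set c : ℕ → Fin n → ℝ := fun t i => Real.exp (-(α t * s t i))
  have hZne : ∀ t ∈ Icc 1 T, Z t ≠ 0 := fun t ht => (hZpos t ht).ne'
  have hT_mem : T ∈ Icc 1 T := right_mem_Icc.2 hT
  have hnormalized : ∑ i, D (T + 1) i = 1 :=
    sum_reweight_eq_one D c Z T (hZ T hT_mem) (hZne T hT_mem) (hD T hT_mem)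
  calc (1 / (n : ℝ)) * (#{i | ∑ t ∈ Icc 1 T, α t * s t i ≤ 0} : ℝ)
      ≤ (1 / (n : ℝ)) * ∑ i, Real.exp (-∑ t ∈ Icc 1 T, α t * s t i) := by
        gcongr
        exact card_filter_nonpos_le_sum_exp_neg _
    _ = ∑ i, D 1 i * ∏ t ∈ Icc 1 T, c t i := by
        simp_rw [c, hD1, ← Real.exp_sum, sum_neg_distrib, mul_sum]
    _ = ∑ i, (∏ t ∈ Icc 1 T, Z t) * D (T + 1) i := by
        simp_rw [prod_mul_eq_mul_prod_of_reweight D c Z T hZne hD]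
    _ = ∏ t ∈ Icc 1 T, Z t := by rw [← mul_sum, hnormalized, mul_one]

open Finset in
/-- AdaBoost training-error bound: with uniform initialization, exponential
reweighting and normalization factors `Z t > 0`, the fraction of instances
with nonpositive margin `∑_{t=1}^T α t * s t i` is at most `∏_{t=1}^T Z t`. -/
theorem adaboost_training_error_le_prod_Z (n T : ℕ) (hn : 1 ≤ n) (hT : 1 ≤ T)
    (s : ℕ → Fin n → ℝ) (hs : ∀ t i, s t i = -1 ∨ s t i = 1)
    (α : ℕ → ℝ) (D : ℕ → Fin n → ℝ) (Z : ℕ → ℝ)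
    (hD1 : ∀ i, D 1 i = 1 / (n : ℝ))
    (hZ : ∀ t ∈ Icc 1 T, Z t = ∑ i, D t i * Real.exp (-(α t * s t i)))
    (hZpos : ∀ t ∈ Icc 1 T, 0 < Z t)
    (hD : ∀ t ∈ Icc 1 T, ∀ i, D (t + 1) i = D t i * Real.exp (-(α t * s t i)) / Z t) :
    (1 / (n : ℝ)) *
        ((univ.filter fun i => ∑ t ∈ Icc 1 T, α t * s t i ≤ 0).card : ℝ) ≤
      ∏ t ∈ Icc 1 T, Z t :=
  adaboost_training_error_le_prod_Z_general n T hT s α D Z hD1 hZ hZpos hD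
end

section
/- Let n ≥ 1, T ≥ 1, and γ ∈ (0, 1/2]. Let s : {1,…,T} × {1,…,n} → {−1,+1}, define D_1(i) = 1/n, ε_t = ∑_{i : s(t,i) = −1} D_t(i), assume 0 < ε_t ≤ 1/2 − γ for every t, set α_t = (1/2)·ln((1−ε_t)/ε_t), Z_t = ∑_i D_t(i)·exp(−α_t·s(t,i)), and D_{t+1}(i) = D_t(i)·exp(−α_t·s(t,i))/Z_t. Then (1/n)·|{i : ∑_{t=1}^T α_t·s(t,i) ≤ 0}| ≤ exp(−2·γ²·T). -/
/-!
Each normalizer `Z t` equals `2 √(ε t (1 - ε t))`, which is at most `√(1 - 4γ²) ≤ exp (-2γ²)`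
when `ε t ≤ 1/2 - γ`. Unrolling the reweighting gives
`D (T+1) i · ∏ Z t = (1/n) exp (-∑ α t s t i)`, so the exponential loss of the ensemble is
`∏ Z t ≤ exp (-2γ²T)`, and the training error is bounded by the exponential loss since
`1[x ≤ 0] ≤ exp (-x)`.
-/

open Finset Real

theorem card_filter_nonpos_le_sum_exp_neg_s10 {ι : Type*} [Fintype ι] (g : ι → ℝ) :
    ((univ.filter fun i => g i ≤ 0).card : ℝ) ≤ ∑ i, exp (-g i) := by
  rw [card_eq_sum_ones, Nat.cast_sum, Nat.cast_one]
  calc ∑ i ∈ univ.filter (fun i => g i ≤ 0), (1 : ℝ)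
      ≤ ∑ i ∈ univ.filter (fun i => g i ≤ 0), exp (-g i) :=
        sum_le_sum fun i hi => one_le_exp (neg_nonneg.2 (mem_filter.1 hi).2)
    _ ≤ ∑ i, exp (-g i) :=
        sum_le_sum_of_subset_of_nonneg (filter_subset _ _) fun i _ _ => (exp_pos _).le

theorem sum_mul_exp_neg_mul_sign {ι : Type*} [Fintype ι] (w s : ι → ℝ)
    (hs : ∀ i, s i = -1 ∨ s i = 1) (hw : ∑ i, w i = 1) (α : ℝ) :
    ∑ i, w i * exp (-(α * s i)) =
      (∑ i ∈ univ.filter fun i => s i = -1, w i) * exp α +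
        (1 - ∑ i ∈ univ.filter fun i => s i = -1, w i) * exp (-α) := by
  have hcorrect : ∑ i ∈ univ.filter (fun i => ¬s i = -1), w i =
      1 - ∑ i ∈ univ.filter fun i => s i = -1, w i := by
    linarith [sum_filter_add_sum_filter_not univ (fun i => s i = -1) w]
  rw [← hcorrect, sum_mul, sum_mul, ← sum_filter_add_sum_filter_not univ (fun i => s i = -1)]
  congr 1
  · refine sum_congr rfl fun i hi => ?_
    rw [(mem_filter.1 hi).2, mul_neg_one, neg_neg]
  · refine sum_congr rfl fun i hi => ?_
    rw [((hs i).resolve_left (mem_filter.1 hi).2), mul_one]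

theorem mul_exp_add_one_sub_mul_exp_neg_of_eq_half_log {ε α : ℝ} (hε0 : 0 < ε) (hε1 : ε < 1)
    (hα : α = 1 / 2 * log ((1 - ε) / ε)) :
    ε * exp α + (1 - ε) * exp (-α) = 2 * √(ε * (1 - ε)) := by
  have hsq : ε * exp α ^ 2 = 1 - ε := by
    rw [← exp_nat_mul, hα, Nat.cast_two, ← mul_assoc, mul_one_div_cancel two_ne_zero, one_mul,
      exp_log (div_pos (sub_pos.2 hε1) hε0), mul_div_cancel₀ _ hε0.ne']
  -- AdaBoost's `α` is exactly the one that balances the mistakes' and the hits' contributions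
  have hbalance : (1 - ε) * exp (-α) = ε * exp α := by
    rw [← hsq, exp_neg, sq, ← mul_assoc, mul_assoc, mul_inv_cancel₀ (exp_pos α).ne', mul_one]
  have hroot : √(ε * (1 - ε)) = ε * exp α := by
    rw [sqrt_eq_iff_mul_self_eq (by nlinarith) (by positivity), ← hsq]
    ring
  rw [hbalance, hroot]
  ring

theorem two_sqrt_mul_one_sub_le_exp {ε γ : ℝ} (hγ : 0 ≤ γ) (hεγ : ε ≤ 1 / 2 - γ) :
    2 * √(ε * (1 - ε)) ≤ exp (-(2 * γ ^ 2)) := by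
  rw [show 2 * √(ε * (1 - ε)) = √(4 * (ε * (1 - ε))) by
    rw [sqrt_mul zero_le_four, show (4 : ℝ) = 2 ^ 2 by norm_num, sqrt_sq zero_le_two]]
  rw [sqrt_le_left (exp_pos _).le, ← exp_nat_mul]
  calc 4 * (ε * (1 - ε)) = 1 - (1 - 2 * ε) ^ 2 := by ring
    _ ≤ -(4 * γ ^ 2) + 1 := by nlinarith
    _ ≤ exp (-(4 * γ ^ 2)) := add_one_le_exp _
    _ = exp ((2 : ℕ) * -(2 * γ ^ 2)) := by ring_nf

section Reweighting

variable {ι : Type*} {D f : ℕ → ι → ℝ} {Z : ℕ → ℝ}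

theorem sum_eq_one_of_reweight [Fintype ι] {T : ℕ} (h1 : ∑ i, D 1 i = 1)
    (hZ : ∀ t ∈ Icc 1 T, Z t = ∑ i, D t i * exp (-f t i))
    (hZ0 : ∀ t ∈ Icc 1 T, ∑ i, D t i = 1 → Z t ≠ 0)
    (hD : ∀ t ∈ Icc 1 T, ∀ i, D (t + 1) i = D t i * exp (-f t i) / Z t) :
    ∀ t ∈ Icc 1 (T + 1), ∑ i, D t i = 1 := by
  intro t ht
  obtain ⟨h1t, htT⟩ := mem_Icc.1 ht
  induction t, h1t using Nat.le_induction with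
  | base => exact h1
  | succ t h1t ih =>
    have ht' : t ∈ Icc 1 T := mem_Icc.2 ⟨h1t, by omega⟩
    simp_rw [hD t ht', ← sum_div, ← hZ t ht']
    exact div_self (hZ0 t ht' (ih (mem_Icc.2 ⟨h1t, by omega⟩) (by omega)))

theorem reweight_mul_prod_eq {T : ℕ} (hZ0 : ∀ t ∈ Icc 1 T, Z t ≠ 0)
    (hD : ∀ t ∈ Icc 1 T, ∀ i, D (t + 1) i = D t i * exp (-f t i) / Z t) (i : ι) :
    D (T + 1) i * ∏ t ∈ Icc 1 T, Z t = D 1 i * exp (-∑ t ∈ Icc 1 T, f t i) := by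
  induction T with
  | zero => simp
  | succ T ih =>
    have hmono : Icc 1 T ⊆ Icc 1 (T + 1) := Icc_subset_Icc_right T.le_succ
    have hT : T + 1 ∈ Icc 1 (T + 1) := mem_Icc.2 ⟨T.succ_pos, le_rfl⟩
    rw [prod_Icc_succ_top (by omega), sum_Icc_succ_top (by omega), hD _ hT, neg_add, exp_add,
      ← mul_assoc (D 1 i), ← ih (fun t ht => hZ0 t (hmono ht)) (fun t ht => hD t (hmono ht))]
    field_simp [hZ0 _ hT]

end Reweighting

open Finset in
theorem adaboost_strength_of_weak_learnability_general (n T : ℕ) (hn : 1 ≤ n)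
    (γ : ℝ) (hγ0 : 0 < γ)
    (s : ℕ → Fin n → ℝ) (hs : ∀ t i, s t i = -1 ∨ s t i = 1)
    (D : ℕ → Fin n → ℝ) (ε α Z : ℕ → ℝ)
    (hD1 : ∀ i, D 1 i = 1 / (n : ℝ))
    (hε : ∀ t ∈ Icc 1 T, ε t = ∑ i ∈ univ.filter fun i => s t i = -1, D t i)
    (hε0 : ∀ t ∈ Icc 1 T, 0 < ε t)
    (hεγ : ∀ t ∈ Icc 1 T, ε t ≤ 1 / 2 - γ)
    (hα : ∀ t ∈ Icc 1 T, α t = 1 / 2 * Real.log ((1 - ε t) / ε t))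
    (hZ : ∀ t ∈ Icc 1 T, Z t = ∑ i, D t i * Real.exp (-(α t * s t i)))
    (hD : ∀ t ∈ Icc 1 T, ∀ i, D (t + 1) i = D t i * Real.exp (-(α t * s t i)) / Z t) :
    (1 / (n : ℝ)) *
        ((univ.filter fun i => ∑ t ∈ Icc 1 T, α t * s t i ≤ 0).card : ℝ) ≤
      Real.exp (-(2 * γ ^ 2 * T)) := by
  have hZ_eq : ∀ t ∈ Icc 1 T, ∑ i, D t i = 1 → Z t = 2 * √(ε t * (1 - ε t)) := fun t ht hsum => by
    rw [hZ t ht, sum_mul_exp_neg_mul_sign _ _ (hs t) hsum, ← hε t ht]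
    exact mul_exp_add_one_sub_mul_exp_neg_of_eq_half_log (hε0 t ht) (by linarith [hεγ t ht])
      (hα t ht)
  have hZ_pos : ∀ t ∈ Icc 1 T, ∑ i, D t i = 1 → 0 < Z t := fun t ht hsum => by
    rw [hZ_eq t ht hsum]
    exact mul_pos two_pos (sqrt_pos.2 (mul_pos (hε0 t ht) (by linarith [hεγ t ht])))
  have hsum : ∀ t ∈ Icc 1 (T + 1), ∑ i, D t i = 1 :=
    sum_eq_one_of_reweight (by simp [hD1, (show 0 < n by omega).ne']) hZ
      (fun t ht h => (hZ_pos t ht h).ne') hD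
  have hsumT : ∀ t ∈ Icc 1 T, ∑ i, D t i = 1 := fun t ht =>
    hsum t (Icc_subset_Icc_right T.le_succ ht)
  have hunroll := reweight_mul_prod_eq (fun t ht => (hZ_pos t ht (hsumT t ht)).ne') hD
  calc (1 / (n : ℝ)) * ((univ.filter fun i => ∑ t ∈ Icc 1 T, α t * s t i ≤ 0).card : ℝ)
      ≤ ∑ i, D 1 i * exp (-∑ t ∈ Icc 1 T, α t * s t i) := by
        simp_rw [hD1, ← mul_sum]
        gcongr
        exact card_filter_nonpos_le_sum_exp_neg_s10 _
    _ = ∏ t ∈ Icc 1 T, Z t := by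
        simp_rw [← hunroll, ← sum_mul, hsum (T + 1) (mem_Icc.2 ⟨T.succ_pos, le_rfl⟩), one_mul]
    _ ≤ ∏ _t ∈ Icc 1 T, exp (-(2 * γ ^ 2)) := prod_le_prod
        (fun t ht => (hZ_pos t ht (hsumT t ht)).le)
        (fun t ht => hZ_eq t ht (hsumT t ht) ▸ two_sqrt_mul_one_sub_le_exp hγ0.le (hεγ t ht))
    _ = exp (-(2 * γ ^ 2 * T)) := by
        rw [prod_const, Nat.card_Icc, Nat.add_sub_cancel, ← exp_nat_mul]
        ring_nf

open Finset in
/-- Strength of Weak Learnability for AdaBoost: if each round's weighted error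
satisfies `0 < ε t ≤ 1/2 - γ`, the learner weights are
`α t = (1/2) ln ((1 - ε t)/ε t)` and the weights are updated by the usual
exponential reweighting, then the training error of the weighted-majority
ensemble after `T` rounds is at most `exp (-2 γ² T)`. -/
theorem adaboost_strength_of_weak_learnability (n T : ℕ) (hn : 1 ≤ n) (hT : 1 ≤ T)
    (γ : ℝ) (hγ0 : 0 < γ) (hγhalf : γ ≤ 1 / 2)
    (s : ℕ → Fin n → ℝ) (hs : ∀ t i, s t i = -1 ∨ s t i = 1)
    (D : ℕ → Fin n → ℝ) (ε α Z : ℕ → ℝ)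
    (hD1 : ∀ i, D 1 i = 1 / (n : ℝ))
    (hε : ∀ t ∈ Icc 1 T, ε t = ∑ i ∈ univ.filter fun i => s t i = -1, D t i)
    (hε0 : ∀ t ∈ Icc 1 T, 0 < ε t)
    (hεγ : ∀ t ∈ Icc 1 T, ε t ≤ 1 / 2 - γ)
    (hα : ∀ t ∈ Icc 1 T, α t = 1 / 2 * Real.log ((1 - ε t) / ε t))
    (hZ : ∀ t ∈ Icc 1 T, Z t = ∑ i, D t i * Real.exp (-(α t * s t i)))
    (hD : ∀ t ∈ Icc 1 T, ∀ i, D (t + 1) i = D t i * Real.exp (-(α t * s t i)) / Z t) :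
    (1 / (n : ℝ)) *
        ((univ.filter fun i => ∑ t ∈ Icc 1 T, α t * s t i ≤ 0).card : ℝ) ≤
      Real.exp (-(2 * γ ^ 2 * T)) :=
  adaboost_strength_of_weak_learnability_general n T hn γ hγ0 s hs D ε α Z hD1 hε hε0 hεγ hα hZ hD
end

section
/- Let K ≥ 2, let Q_1,…,Q_K be positive reals (site qualities), let ρ ∈ [0,1) and c > 0, and let τ_j(0) > 0 for all j. Define the mean-field recruitment dynamics τ_j(t+1) = (1−ρ)·τ_j(t) + c·Q_j·τ_j(t)/S(t), where S(t) = ∑_{k=1}^K τ_k(t). Then every τ_j(t) remains positive for all t, and for any two sites j, j' with Q_j ≥ Q_{j'}, the ratio τ_j(t)/τ_{j'}(t) is nondecreasing in t; if moreover Q_j > Q_{j'}, the ratio is strictly increasing. -/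
/-!
Each recruitment wave multiplies the pheromone on site `j` by `1 - ρ + c Q_j / S(t)`. The total
`S(t)` is shared by all sites, so this factor is positive and increasing in the quality `Q_j`;
the ratio `τ_j / τ_j'` is therefore multiplied at every wave by a quotient of factors that is
at least `1`, and greater than `1` when `Q_j' < Q_j`.
-/

open Finset

/-- `τ_j(t + 1) = τ_j(t) * growthFactor ρ c S(t) Q_j`. -/
noncomputable def growthFactor (ρ c S q : ℝ) : ℝ := 1 - ρ + c * q / S

section growthFactor

variable {ρ c S q q' : ℝ}

lemma growthFactor_pos (hρ : ρ < 1) (hc : 0 ≤ c) (hS : 0 ≤ S) (hq : 0 ≤ q) :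
    0 < growthFactor ρ c S q := by
  have : 0 ≤ c * q / S := by positivity
  unfold growthFactor
  linarith

lemma growthFactor_mono (hc : 0 ≤ c) (hS : 0 ≤ S) (hq : q' ≤ q) :
    growthFactor ρ c S q' ≤ growthFactor ρ c S q := by
  unfold growthFactor
  gcongr

lemma growthFactor_strictMono (hc : 0 < c) (hS : 0 < S) (hq : q' < q) :
    growthFactor ρ c S q' < growthFactor ρ c S q := by
  unfold growthFactor
  gcongr

end growthFactor

lemma div_le_mul_div_mul_of_le {x y a b : ℝ} (hx : 0 ≤ x) (hy : 0 ≤ y) (hb : 0 < b)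
    (hba : b ≤ a) : x / y ≤ x * a / (y * b) := by
  rw [mul_div_mul_comm]
  exact le_mul_of_one_le_right (div_nonneg hx hy) ((one_le_div hb).2 hba)

lemma div_lt_mul_div_mul_of_lt {x y a b : ℝ} (hx : 0 < x) (hy : 0 < y) (hb : 0 < b)
    (hba : b < a) : x / y < x * a / (y * b) := by
  rw [mul_div_mul_comm]
  exact lt_mul_of_one_lt_right (div_pos hx hy) ((one_lt_div hb).2 hba)

theorem recruitment_positive_feedback_general (K : ℕ)
    (Q : Fin K → ℝ) (hQ : ∀ j, 0 < Q j)
    (ρ : ℝ) (hρ1 : ρ < 1) (c : ℝ) (hc : 0 < c)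
    (τ : ℕ → Fin K → ℝ) (hτ0 : ∀ j, 0 < τ 0 j)
    (hrec : ∀ t j, τ (t + 1) j =
      (1 - ρ) * τ t j + c * Q j * τ t j / (∑ k, τ t k)) :
    (∀ t j, 0 < τ t j) ∧
    ∀ j j' : Fin K, Q j' ≤ Q j →
      (∀ t, τ t j / τ t j' ≤ τ (t + 1) j / τ (t + 1) j') ∧
      (Q j' < Q j → ∀ t, τ t j / τ t j' < τ (t + 1) j / τ (t + 1) j') := by
  have step (t j) : τ (t + 1) j = τ t j * growthFactor ρ c (∑ k, τ t k) (Q j) := by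
    rw [hrec, growthFactor]
    ring
  have factor_pos (t j) (hτ : ∀ k, 0 < τ t k) : 0 < growthFactor ρ c (∑ k, τ t k) (Q j) :=
    growthFactor_pos hρ1 hc.le (sum_nonneg fun k _ => (hτ k).le) (hQ j).le
  have pos (t) : ∀ j, 0 < τ t j := by
    induction t with
    | zero => exact hτ0
    | succ t ih => exact fun j => step t j ▸ mul_pos (ih j) (factor_pos t j ih)
  refine ⟨pos, fun j j' hle => ⟨fun t => ?_, fun hlt t => ?_⟩⟩
  · rw [step, step]
    exact div_le_mul_div_mul_of_le (pos t j).le (pos t j').le (factor_pos t j' (pos t))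
      (growthFactor_mono hc.le (sum_nonneg fun k _ => (pos t k).le) hle)
  · rw [step, step]
    exact div_lt_mul_div_mul_of_lt (pos t j) (pos t j') (factor_pos t j' (pos t))
      (growthFactor_strictMono hc (sum_pos (fun k _ => pos t k) ⟨j, mem_univ j⟩) hlt)

open Finset in
/-- Mean-field recruitment dynamics: with site qualities `Q j > 0`, evaporation
rate `ρ ∈ [0,1)`, constant `c > 0` and dynamics
`τ (t+1) j = (1-ρ) τ t j + c * Q j * τ t j / S t` (where `S t = ∑ k, τ t k`),
all pheromone concentrations stay positive, and for sites with `Q j' ≤ Q j`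
the ratio `τ t j / τ t j'` is nondecreasing in `t`, strictly increasing if
`Q j' < Q j`. -/
theorem recruitment_positive_feedback (K : ℕ) (hK : 2 ≤ K)
    (Q : Fin K → ℝ) (hQ : ∀ j, 0 < Q j)
    (ρ : ℝ) (hρ0 : 0 ≤ ρ) (hρ1 : ρ < 1) (c : ℝ) (hc : 0 < c)
    (τ : ℕ → Fin K → ℝ) (hτ0 : ∀ j, 0 < τ 0 j)
    (hrec : ∀ t j, τ (t + 1) j =
      (1 - ρ) * τ t j + c * Q j * τ t j / (∑ k, τ t k)) :
    (∀ t j, 0 < τ t j) ∧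
    ∀ j j' : Fin K, Q j' ≤ Q j →
      (∀ t, τ t j / τ t j' ≤ τ (t + 1) j / τ (t + 1) j') ∧
      (Q j' < Q j → ∀ t, τ t j / τ t j' < τ (t + 1) j / τ (t + 1) j') :=
  recruitment_positive_feedback_general K Q hQ ρ hρ1 c hc τ hτ0 hrec
end
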